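/- Let A be an n×n real matrix, B an n×m real matrix, G an m×m real symmetric positive definite matrix, and C a k×n real matrix with rank C = k and Moore–Penrose pseudoinverse C⁺, such that CA(I − C⁺C) = 0. Suppose there exist a k×k real symmetric positive definite matrix P and a real α > 0 such that the block matrix [[P(CAC⁺) + (CAC⁺)ᵀP + αP, P(CB)], [(CB)ᵀP, −αG]] is negative definite. Then for every differentiable x : ℝ → ℝⁿ and every f : ℝ → ℝᵐ with f(t)ᵀGf(t) ≤ 1 for all t ≥ 0 and x′(t) = Ax(t) + Bf(t) for all t ≥ 0, one has: (i) limsup_{t→∞} x(t)ᵀCᵀPCx(t) ≤ 1, and (ii) for all t₀ ≤ t with t₀ ≥ 0, if x(t₀)ᵀCᵀPCx(t₀) ≤ 1 then x(t)ᵀCᵀPCx(t) ≤ 1. -/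

import Mathlib

/-!
Put `y = C x`. Since `C A = (C A C⁺) C`, the output obeys the closed system
`y' = (C A C⁺) y + C B f`. Evaluating the negative definite block form at `(y, f)` gives, for
`V = yᵀ P y`, the dissipation inequality `V' ≤ α (fᵀ G f - V) ≤ α (1 - V)`. Hence
`(V - 1) e^{α t}` is nonincreasing: `V ≤ 1` is preserved forward in time, and
`V t ≤ 1 + (V 0 - 1) e^{-α t}` bounds the limit superior.
-/

open Matrix Filter

/-- `Ap` is the Moore–Penrose pseudoinverse of `A`. -/
def IsMoorePenrose {m n : ℕ} (A : Matrix (Fin m) (Fin n) ℝ)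
    (Ap : Matrix (Fin n) (Fin m) ℝ) : Prop :=
  A * Ap * A = A ∧ Ap * A * Ap = Ap ∧ (A * Ap)ᵀ = A * Ap ∧ (Ap * A)ᵀ = Ap * A

section Calculus

variable {𝕜 : Type*} [NontriviallyNormedField 𝕜] {ι κ : Type*} [Fintype ι]
  {u v : 𝕜 → ι → 𝕜} {u' v' : ι → 𝕜} {t : 𝕜}

theorem HasDerivAt.dotProduct (hu : HasDerivAt u u' t) (hv : HasDerivAt v v' t) :
    HasDerivAt (fun s => u s ⬝ᵥ v s) (u' ⬝ᵥ v t + u t ⬝ᵥ v') t := by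
  rw [_root_.dotProduct, _root_.dotProduct, ← Finset.sum_add_distrib]
  exact HasDerivAt.fun_sum fun i _ => (hasDerivAt_pi.mp hu i).fun_mul (hasDerivAt_pi.mp hv i)

theorem HasDerivAt.mulVec (M : Matrix κ ι 𝕜) (hu : HasDerivAt u u' t) :
    HasDerivAt (fun s => M *ᵥ u s) (M *ᵥ u') t :=
  hasDerivAt_pi.2 fun i => by
    have := (hasDerivAt_const t (M i)).dotProduct hu
    rw [zero_dotProduct, zero_add] at this
    exact this

end Calculus

section Comparison

variable {V V' : ℝ → ℝ} {α c a : ℝ}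

theorem antitoneOn_sub_mul_exp_of_hasDerivAt_le (hV : ∀ t ≥ a, HasDerivAt V (V' t) t)
    (hV' : ∀ t ≥ a, V' t ≤ α * (c - V t)) :
    AntitoneOn (fun t => (V t - c) * Real.exp (α * t)) (Set.Ici a) := by
  have hW : ∀ t ≥ a, HasDerivAt (fun t => (V t - c) * Real.exp (α * t))
      (V' t * Real.exp (α * t) + (V t - c) * (Real.exp (α * t) * α)) t := fun t ht =>
    ((hV t ht).sub_const c).mul (by simpa using ((hasDerivAt_id t).const_mul α).exp)
  refine antitoneOn_of_hasDerivWithinAt_nonpos (convex_Ici a)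
    (fun t ht => (hW t ht).continuousAt.continuousWithinAt)
    (fun t ht => (hW t (interior_subset ht)).hasDerivWithinAt) fun t ht => ?_
  have := hV' t (interior_subset ht)
  have := Real.exp_pos (α * t)
  nlinarith

theorem le_of_hasDerivAt_le_of_le (hV : ∀ t ≥ a, HasDerivAt V (V' t) t)
    (hV' : ∀ t ≥ a, V' t ≤ α * (c - V t)) {t₀ t : ℝ} (ht₀ : a ≤ t₀) (ht : t₀ ≤ t)
    (hVt₀ : V t₀ ≤ c) : V t ≤ c := by
  have := antitoneOn_sub_mul_exp_of_hasDerivAt_le hV hV' ht₀ (ht₀.trans ht) ht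
  have := Real.exp_pos (α * t₀)
  have := Real.exp_pos (α * t)
  nlinarith

theorem limsup_le_of_hasDerivAt_le (hα : 0 < α) (hbdd : IsBoundedUnder (· ≥ ·) atTop V)
    (hV : ∀ t ≥ a, HasDerivAt V (V' t) t) (hV' : ∀ t ≥ a, V' t ≤ α * (c - V t)) :
    limsup V atTop ≤ c := by
  set K := (V a - c) * Real.exp (α * a)
  have hbound : ∀ t ≥ a, V t ≤ c + K * Real.exp (-(α * t)) := fun t ht => by
    have := antitoneOn_sub_mul_exp_of_hasDerivAt_le hV hV' Set.self_mem_Ici ht ht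
    have hK : K * Real.exp (-(α * t)) = K / Real.exp (α * t) := by
      rw [Real.exp_neg, div_eq_mul_inv]
    rw [hK, ← sub_le_iff_le_add', le_div_iff₀ (Real.exp_pos _)]
    simpa using this
  have htend : Tendsto (fun t => c + K * Real.exp (-(α * t))) atTop (nhds c) := by
    simpa using tendsto_const_nhds.add
      ((Real.tendsto_exp_neg_atTop_nhds_zero.comp (tendsto_id.const_mul_atTop hα)).const_mul K)
  calc limsup V atTop ≤ limsup (fun t => c + K * Real.exp (-(α * t))) atTop :=
        limsup_le_limsup ((eventually_ge_atTop a).mono hbound) hbdd.isCoboundedUnder_le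
          htend.isBoundedUnder_le
    _ = c := htend.limsup_eq

end Comparison

section LinearAlgebra

variable {R : Type*} [CommRing R] {ι κ μ : Type*} [Fintype ι] [Fintype κ] [Fintype μ]

theorem dotProduct_transpose_mul_mul_mulVec (C : Matrix κ ι R) (P : Matrix κ κ R) (u w : ι → R) :
    u ⬝ᵥ (Cᵀ * P * C) *ᵥ w = (C *ᵥ u) ⬝ᵥ P *ᵥ (C *ᵥ w) := by
  rw [← mulVec_mulVec, ← mulVec_mulVec, dotProduct_mulVec, vecMul_transpose]

theorem dotProduct_fromBlocks_mulVec_nonpos [PartialOrder R] [IsOrderedAddMonoid R] [StarRing R]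
    [TrivialStar R]
    {A₁₁ : Matrix ι ι R} {A₁₂ : Matrix ι κ R} {A₂₁ : Matrix κ ι R} {A₂₂ : Matrix κ κ R}
    (h : (-fromBlocks A₁₁ A₁₂ A₂₁ A₂₂).PosSemidef) (y : ι → R) (g : κ → R) :
    y ⬝ᵥ A₁₁ *ᵥ y + y ⬝ᵥ A₁₂ *ᵥ g + (g ⬝ᵥ A₂₁ *ᵥ y + g ⬝ᵥ A₂₂ *ᵥ g) ≤ 0 := by
  simpa only [star_trivial, neg_mulVec, fromBlocks_mulVec, Sum.elim_comp_inl, Sum.elim_comp_inr,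
    dotProduct_neg, sumElim_dotProduct_sumElim, dotProduct_add, neg_nonneg]
    using h.dotProduct_mulVec_nonneg (Sum.elim y g)

end LinearAlgebra

theorem dissipation_le_of_posSemidef {ι κ : Type*} [Fintype ι] [Fintype κ]
    {P D : Matrix ι ι ℝ} {E : Matrix ι κ ℝ} {G : Matrix κ κ ℝ} {α : ℝ}
    (h : (-fromBlocks (P * D + Dᵀ * P + α • P) (P * E) (Eᵀ * P) (-(α • G))).PosSemidef)
    (y : ι → ℝ) (g : κ → ℝ) :
    (D *ᵥ y + E *ᵥ g) ⬝ᵥ P *ᵥ y + y ⬝ᵥ P *ᵥ (D *ᵥ y + E *ᵥ g) ≤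
      α * (g ⬝ᵥ G *ᵥ g - y ⬝ᵥ P *ᵥ y) := by
  have hblock := dotProduct_fromBlocks_mulVec_nonpos h y g
  simp only [add_mulVec, smul_mulVec, neg_mulVec, ← mulVec_mulVec, dotProduct_add,
    dotProduct_smul, dotProduct_neg, smul_eq_mul] at hblock
  rw [dotProduct_mulVec y Dᵀ, dotProduct_mulVec g Eᵀ, vecMul_transpose, vecMul_transpose] at hblock
  rw [mulVec_add, dotProduct_add, add_dotProduct]
  linarith

theorem hasDerivAt_mulVec_of_mul_sub_eq_zero {ι κ μ : Type*} [Fintype ι] [Fintype κ] [Fintype μ]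
    [DecidableEq ι] {A : Matrix ι ι ℝ} {B : Matrix ι μ ℝ} {C : Matrix κ ι ℝ}
    {Cp : Matrix ι κ ℝ} (hCA : C * A * (1 - Cp * C) = 0) {x : ℝ → ι → ℝ} {u : μ → ℝ} {t : ℝ}
    (hx : HasDerivAt x (A *ᵥ x t + B *ᵥ u) t) :
    HasDerivAt (fun s => C *ᵥ x s) ((C * A * Cp) *ᵥ (C *ᵥ x t) + (C * B) *ᵥ u) t := by
  have hCA' : C * A * Cp * C = C * A := by
    rw [Matrix.mul_sub, Matrix.mul_one, sub_eq_zero] at hCA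
    rw [Matrix.mul_assoc _ Cp, ← hCA]
  have := hx.mulVec C
  rw [mulVec_add, mulVec_mulVec, mulVec_mulVec] at this
  rwa [mulVec_mulVec, hCA']

theorem attracting_cylinder_general (n m k : ℕ)
    (A : Matrix (Fin n) (Fin n) ℝ) (B : Matrix (Fin n) (Fin m) ℝ)
    (G : Matrix (Fin m) (Fin m) ℝ)
    (C : Matrix (Fin k) (Fin n) ℝ)
    (Cp : Matrix (Fin n) (Fin k) ℝ)
    (hCA : C * A * (1 - Cp * C) = 0)
    (P : Matrix (Fin k) (Fin k) ℝ) (hP : P.PosDef)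
    (α : ℝ) (hα : 0 < α)
    (hLMI : (-(Matrix.fromBlocks
        (P * (C * A * Cp) + (C * A * Cp)ᵀ * P + α • P) (P * (C * B))
        ((C * B)ᵀ * P) (-(α • G)))).PosDef) :
    ∀ (x : ℝ → Fin n → ℝ) (f : ℝ → Fin m → ℝ),
      Differentiable ℝ x →
      (∀ t : ℝ, 0 ≤ t → f t ⬝ᵥ G.mulVec (f t) ≤ 1) →
      (∀ t : ℝ, 0 ≤ t → HasDerivAt x (A.mulVec (x t) + B.mulVec (f t)) t) →
      limsup (fun t => x t ⬝ᵥ (Cᵀ * P * C).mulVec (x t)) atTop ≤ 1 ∧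
      ∀ t₀ t : ℝ, 0 ≤ t₀ → t₀ ≤ t →
        x t₀ ⬝ᵥ (Cᵀ * P * C).mulVec (x t₀) ≤ 1 →
        x t ⬝ᵥ (Cᵀ * P * C).mulVec (x t) ≤ 1 := by
  intro x f _ hf hx
  set y : ℝ → Fin k → ℝ := fun t => C *ᵥ x t
  set y' : ℝ → Fin k → ℝ := fun t => (C * A * Cp) *ᵥ y t + (C * B) *ᵥ f t
  have hy : ∀ t ≥ 0, HasDerivAt y (y' t) t := fun t ht =>
    hasDerivAt_mulVec_of_mul_sub_eq_zero hCA (hx t ht)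
  have hV : ∀ t ≥ 0, HasDerivAt (fun t => y t ⬝ᵥ P *ᵥ y t)
      (y' t ⬝ᵥ P *ᵥ y t + y t ⬝ᵥ P *ᵥ y' t) t := fun t ht =>
    (hy t ht).dotProduct ((hy t ht).mulVec P)
  have hV' : ∀ t ≥ 0, y' t ⬝ᵥ P *ᵥ y t + y t ⬝ᵥ P *ᵥ y' t ≤ α * (1 - y t ⬝ᵥ P *ᵥ y t) :=
    fun t ht => (dissipation_le_of_posSemidef hLMI.posSemidef _ _).trans
      (mul_le_mul_of_nonneg_left (sub_le_sub_right (hf t ht) _) hα.le)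
  have hbdd : IsBoundedUnder (· ≥ ·) atTop (fun t => y t ⬝ᵥ P *ᵥ y t) :=
    isBoundedUnder_of ⟨0, fun t => by simpa using hP.posSemidef.dotProduct_mulVec_nonneg (y t)⟩
  simp only [dotProduct_transpose_mul_mul_mulVec]
  exact ⟨limsup_le_of_hasDerivAt_le hα hbdd hV hV',
    fun t₀ t ht₀ ht => le_of_hasDerivAt_le_of_le hV hV' ht₀ ht⟩

/-- Theorem 1 (method of attracting cylinders): if CA(I−C⁺C)=0 and the LMI
[[P(CAC⁺)+(CAC⁺)ᵀP+αP, P(CB)],[(CB)ᵀP, −αG]] ≺ 0 holds, then the set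
{x | xᵀCᵀPCx ≤ 1} is an attracting and invariant cylinder for x' = Ax + Bf. -/
theorem attracting_cylinder (n m k : ℕ)
    (A : Matrix (Fin n) (Fin n) ℝ) (B : Matrix (Fin n) (Fin m) ℝ)
    (G : Matrix (Fin m) (Fin m) ℝ) (hG : G.PosDef)
    (C : Matrix (Fin k) (Fin n) ℝ) (hrankC : C.rank = k)
    (Cp : Matrix (Fin n) (Fin k) ℝ) (hCp : IsMoorePenrose C Cp)
    (hCA : C * A * (1 - Cp * C) = 0)
    (P : Matrix (Fin k) (Fin k) ℝ) (hP : P.PosDef)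
    (α : ℝ) (hα : 0 < α)
    (hLMI : (-(Matrix.fromBlocks
        (P * (C * A * Cp) + (C * A * Cp)ᵀ * P + α • P) (P * (C * B))
        ((C * B)ᵀ * P) (-(α • G)))).PosDef) :
    ∀ (x : ℝ → Fin n → ℝ) (f : ℝ → Fin m → ℝ),
      Differentiable ℝ x →
      (∀ t : ℝ, 0 ≤ t → f t ⬝ᵥ G.mulVec (f t) ≤ 1) →
      (∀ t : ℝ, 0 ≤ t → HasDerivAt x (A.mulVec (x t) + B.mulVec (f t)) t) →
      limsup (fun t => x t ⬝ᵥ (Cᵀ * P * C).mulVec (x t)) atTop ≤ 1 ∧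
      ∀ t₀ t : ℝ, 0 ≤ t₀ → t₀ ≤ t →
        x t₀ ⬝ᵥ (Cᵀ * P * C).mulVec (x t₀) ≤ 1 →
        x t ⬝ᵥ (Cᵀ * P * C).mulVec (x t) ≤ 1 :=
  attracting_cylinder_general n m k A B G C Cp hCA P hP α hα hLMI
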